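/- Probability mass function of the noise-only balls-into-bins mechanism: let m, k, n be positive integers and p ∈ [0,1], and let M₀ be the random occupancy vector in ℕ^m produced by placing k balls independently and uniformly into m bins and, for each of n further independent trials, placing a ball into a uniformly random bin with probability p and no ball otherwise. Then for any vector W = (w₁,…,w_m) ∈ ℕ^m with total w = w₁ + ⋯ + w_m satisfying k ≤ w ≤ k + n, Pr[M₀ = W] = C(n, w−k) · p^{w−k} · (1−p)^{n−w+k} · (w! / ∏_{i=1}^m w_i!) · m^{−w}, where C(n, j) denotes the binomial coefficient. -/

import Mathlib

open scoped ENNReal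

noncomputable def uniformBin (m : ℕ) (hm : 0 < m) : PMF (Fin m) :=
  PMF.uniformOfFinset Finset.univ
    (Finset.univ_nonempty_iff.mpr (Fin.pos_iff_nonempty.mp hm))

/-- Sum of `n` independent copies of a random multiset. -/
noncomputable def repeatMS {α : Type*} (ν : PMF (Multiset α)) : ℕ → PMF (Multiset α)
  | 0 => PMF.pure 0
  | n + 1 => ν.bind fun s => (repeatMS ν n).map (s + ·)

/-- With probability `p`, one draw from `ν`; otherwise nothing. -/
noncomputable def trialM {α : Type*} (ν : PMF α) (p : ℝ≥0∞) (hp : p ≤ 1) : PMF (Multiset α) :=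
  (PMF.ofFintype (fun b : Bool => cond b p (1 - p))
    (by simpa using add_tsub_cancel_of_le hp)).bind fun b => if b then ν.map (fun x => {x}) else PMF.pure 0

/-- The noise-only balls-into-bins mechanism, as a random occupancy vector:
`k` balls thrown uniformly into `m` bins, plus `n` trials each throwing a
uniform ball with probability `p`. -/
noncomputable def M0 (m k n : ℕ) (hm : 0 < m) (p : ℝ≥0∞) (hp : p ≤ 1) : PMF (Fin m → ℕ) :=
  ((repeatMS ((uniformBin m hm).map (fun y => {y})) k).bind fun A =>
    (repeatMS (trialM (uniformBin m hm) p hp) n).map fun C => A + C).map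
      (fun o i => o.count i)

/-! For a law `ν` on `α`, call `s ↦ f |s| · countPerms s · ∏_{x ∈ s} ν x` the law with profile `f`;
since `countPerms s = |s|! / ∏ₓ (count x s)!` counts the orderings of `s`, for `f = 𝟙_{c}` it is
the law of `c` independent `ν`-balls. By the Pascal identity
`∑_{x ∈ s} countPerms (s - x) = countPerms s`,
adding one ball to a law with profile `f` gives the profile `c ↦ f (c - 1)`, and adding one
`p`-trial gives the profile obeying the binomial recursion. So `n` trials have the profile
`j ↦ C(n, j) pʲ (1 - p)ⁿ⁻ʲ`, the `k` extra balls shift it by `k`, and the occupancy vector of a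
multiset determines it. -/

open Multiset

namespace PMF

variable {α β : Type*}

theorem map_apply_of_injective {f : α → β} (hf : f.Injective) (μ : PMF α) (a : α) :
    μ.map f (f a) = μ a := by
  rw [map_apply, tsum_eq_single a fun b hb => if_neg fun h => hb (hf h).symm, if_pos rfl]

noncomputable def addConv [Add α] (μ κ : PMF α) : PMF α :=
  μ.bind fun a => κ.map (a + ·)

theorem addConv_assoc [AddSemigroup α] (μ κ ρ : PMF α) :
    addConv (addConv μ κ) ρ = addConv μ (addConv κ ρ) := by
  simp only [addConv, bind_bind, bind_map, map_bind, map_comp]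
  congr! 2 with a
  refine congrArg κ.bind (funext fun b => ?_)
  simp only [Function.comp_def, add_assoc]

theorem pure_zero_addConv [AddZeroClass α] (κ : PMF α) : addConv (pure 0) κ = κ := by
  simp only [addConv, pure_bind, zero_add]
  exact map_id κ

theorem map_add_left_apply [DecidableEq α] (κ : PMF (Multiset α)) (t s : Multiset α) :
    κ.map (t + ·) s = if t ≤ s then κ (s - t) else 0 := by
  split_ifs with h
  · obtain ⟨u, rfl⟩ := Multiset.le_iff_exists_add.mp h
    rw [add_tsub_cancel_left, map_apply_of_injective (add_right_injective t)]
  · rw [apply_eq_zero_iff, support_map]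
    rintro ⟨u, -, rfl⟩
    exact h (le_add_right le_rfl)

theorem addConv_map_singleton_apply [DecidableEq α] (ν : PMF α) (κ : PMF (Multiset α))
    (s : Multiset α) :
    addConv (ν.map ({·})) κ s = ∑ x ∈ s.toFinset, ν x * κ (s.erase x) := by
  have hterm (x : α) : ν x * κ.map ({x} + ·) s = if x ∈ s then ν x * κ (s.erase x) else 0 := by
    simp only [map_add_left_apply, singleton_le, sub_singleton, mul_ite, mul_zero]
  rw [addConv, bind_map, bind_apply]
  simp only [Function.comp_apply, hterm]
  rw [tsum_eq_sum fun x hx => if_neg (mt mem_toFinset.mpr hx)]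
  exact Finset.sum_congr rfl fun x hx => if_pos (mem_toFinset.mp hx)

theorem addConv_trialM_apply (ν : PMF α) (p : ℝ≥0∞) (hp : p ≤ 1) (κ : PMF (Multiset α))
    (s : Multiset α) :
    addConv (trialM ν p hp) κ s = (1 - p) * κ s + p * addConv (ν.map ({·})) κ s := by
  rw [addConv, trialM, bind_bind, bind_apply, tsum_bool]
  simp only [ofFintype_apply, cond_false, cond_true, Bool.false_eq_true, if_false, if_true,
    pure_bind, zero_add]
  rw [show map (fun x => x) κ = κ from map_id κ]
  rfl

end PMF

open scoped Nat

namespace Multiset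

variable {α : Type*} [DecidableEq α]

theorem countPerms_mul_prod_factorial {s : Multiset α} {t : Finset α} (h : s.toFinset ⊆ t) :
    s.countPerms * ∏ a ∈ t, (s.count a)! = (card s)! := by
  rw [countPerms, Finsupp.multinomial_eq_of_support_subset (toFinsupp_support s ▸ h), mul_comm,
    show ⇑(toFinsupp s) = fun a => s.count a from funext (toFinsupp_apply s),
    Nat.multinomial_spec, sum_count_eq_card fun a ha => h (mem_toFinset.mpr ha)]

theorem card_mul_countPerms_erase {s : Multiset α} {x : α} (hx : x ∈ s) :
    card s * (s.erase x).countPerms = s.count x * s.countPerms := by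
  have hxt : x ∈ s.toFinset := mem_toFinset.mpr hx
  have hprod : ∏ a ∈ s.toFinset, (s.count a)!
      = s.count x * ∏ a ∈ s.toFinset, ((s.erase x).count a)! := by
    rw [← Finset.mul_prod_erase _ _ hxt, ← Finset.mul_prod_erase _ _ hxt, count_erase_self,
      ← Nat.mul_factorial_pred (count_ne_zero.mpr hx), mul_assoc]
    congr 2
    exact Finset.prod_congr rfl fun a ha => by rw [count_erase_of_ne (Finset.ne_of_mem_erase ha)]
  have hs := countPerms_mul_prod_factorial (subset_refl s.toFinset)
  have he := countPerms_mul_prod_factorial (s := s.erase x) (t := s.toFinset)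
    (toFinset_subset.mpr (erase_subset x s))
  rw [card_erase_of_mem hx, Nat.pred_eq_sub_one] at he
  refine Nat.eq_of_mul_eq_mul_right
    (Finset.prod_pos (s := s.toFinset) fun a _ => Nat.factorial_pos ((s.erase x).count a)) ?_
  rw [mul_assoc, he, Nat.mul_factorial_pred (card_pos_iff_exists_mem.mpr ⟨x, hx⟩).ne', ← hs,
    hprod]
  ring

theorem sum_countPerms_erase {s : Multiset α} (hs : s ≠ 0) :
    ∑ x ∈ s.toFinset, (s.erase x).countPerms = s.countPerms := by
  refine Nat.eq_of_mul_eq_mul_left (card_pos.mpr hs) ?_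
  rw [Finset.mul_sum,
    Finset.sum_congr rfl fun x hx => card_mul_countPerms_erase (mem_toFinset.mp hx),
    ← Finset.sum_mul, toFinset_sum_count_eq]

end Multiset

section BinomialWeight

variable {R : Type*} [CommSemiring R]

def binomWeight (p q : R) (n j : ℕ) : R :=
  n.choose j * p ^ j * q ^ (n - j)

theorem binomWeight_zero_left (p q : R) (j : ℕ) :
    binomWeight p q 0 j = if j = 0 then 1 else 0 := by
  rcases j with _ | j <;> simp [binomWeight]

theorem binomWeight_succ_zero (p q : R) (n : ℕ) :
    binomWeight p q (n + 1) 0 = q * binomWeight p q n 0 := by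
  simp [binomWeight, pow_succ, mul_comm]

theorem binomWeight_succ_succ (p q : R) (n j : ℕ) :
    binomWeight p q (n + 1) (j + 1)
      = q * binomWeight p q n (j + 1) + p * binomWeight p q n j := by
  simp only [binomWeight, Nat.choose_succ_succ', Nat.succ_sub_succ, Nat.cast_add]
  rcases Nat.lt_or_ge n (j + 1) with h | h
  · rw [Nat.choose_eq_zero_of_lt h, Nat.sub_eq_zero_of_le (Nat.lt_succ_iff.mp h)]
    ring
  · obtain ⟨d, rfl⟩ := Nat.exists_eq_add_of_le h
    rw [show j + 1 + d - j = d + 1 by omega, Nat.add_sub_cancel_left]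
    ring

end BinomialWeight

section ProfileMass

variable {α : Type*} [DecidableEq α]

noncomputable def profileMass (ν : PMF α) (f : ℕ → ℝ≥0∞) (s : Multiset α) : ℝ≥0∞ :=
  f (card s) * s.countPerms * (s.map ν).prod

theorem sum_mul_profileMass_erase (ν : PMF α) (f : ℕ → ℝ≥0∞) {s : Multiset α} (hs : s ≠ 0) :
    ∑ x ∈ s.toFinset, ν x * profileMass ν f (s.erase x)
      = profileMass ν (fun c => f (c - 1)) s := by
  have hterm (x : α) (hx : x ∈ s.toFinset) : ν x * profileMass ν f (s.erase x)
      = f (card s - 1) * (s.map ν).prod * ((s.erase x).countPerms : ℝ≥0∞) := by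
    have hx := mem_toFinset.mp hx
    rw [profileMass, card_erase_of_mem hx, Nat.pred_eq_sub_one, ← prod_map_erase hx]
    ring
  rw [Finset.sum_congr rfl hterm, ← Finset.mul_sum, ← Nat.cast_sum, sum_countPerms_erase hs,
    profileMass]
  ring

theorem repeatMS_trialM_apply (ν : PMF α) (p : ℝ≥0∞) (hp : p ≤ 1) (n : ℕ) (s : Multiset α) :
    repeatMS (trialM ν p hp) n s = profileMass ν (binomWeight p (1 - p) n) s := by
  induction n generalizing s with
  | zero =>
    rw [repeatMS, PMF.pure_apply, profileMass, binomWeight_zero_left]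
    rcases eq_or_ne s 0 with rfl | hs <;> simp [*]
  | succ n ih =>
    change PMF.addConv (trialM ν p hp) (repeatMS (trialM ν p hp) n) s = _
    rw [PMF.addConv_trialM_apply, PMF.addConv_map_singleton_apply]
    simp only [ih]
    rcases eq_or_ne s 0 with rfl | hs
    · simp [profileMass, binomWeight_succ_zero]
    · obtain ⟨j, hj⟩ := Nat.exists_eq_add_one_of_ne_zero (card_pos.mpr hs).ne'
      rw [sum_mul_profileMass_erase ν _ hs]
      simp only [profileMass, hj, Nat.add_sub_cancel, binomWeight_succ_succ]
      ring

theorem addConv_repeatMS_map_singleton_apply (ν : PMF α) (f : ℕ → ℝ≥0∞)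
    (κ : PMF (Multiset α)) (hκ : ∀ s, κ s = profileMass ν f s) (k : ℕ) (s : Multiset α) :
    PMF.addConv (repeatMS (ν.map ({·})) k) κ s
      = profileMass ν (fun c => if k ≤ c then f (c - k) else 0) s := by
  induction k generalizing s with
  | zero => simp [repeatMS, PMF.pure_zero_addConv, hκ]
  | succ k ih =>
    change PMF.addConv (PMF.addConv (ν.map ({·})) (repeatMS (ν.map ({·})) k)) κ s = _
    rw [PMF.addConv_assoc, PMF.addConv_map_singleton_apply]
    simp only [ih]
    rcases eq_or_ne s 0 with rfl | hs
    · simp [profileMass]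
    · rw [sum_mul_profileMass_erase ν _ hs]
      have hshift : (if k ≤ card s - 1 then f (card s - 1 - k) else 0)
          = if k + 1 ≤ card s then f (card s - (k + 1)) else 0 := by
        have := card_pos.mpr hs
        rw [Nat.sub_sub, add_comm 1 k]
        exact if_congr (by omega) rfl rfl
      simp only [profileMass, hshift]

end ProfileMass

theorem uniformBin_apply (m : ℕ) (hm : 0 < m) (x : Fin m) :
    uniformBin m hm x = (m : ℝ≥0∞)⁻¹ := by
  simp [uniformBin, PMF.uniformOfFinset_apply]

theorem M0_apply_count (m k n : ℕ) (hm : 0 < m) (p : ℝ≥0∞) (hp : p ≤ 1)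
    (s : Multiset (Fin m)) :
    M0 m k n hm p hp (fun i => s.count i)
      = (if k ≤ card s then binomWeight p (1 - p) n (card s - k) else 0)
          * s.countPerms * (m : ℝ≥0∞)⁻¹ ^ card s := by
  have hprod : (s.map (uniformBin m hm)).prod = (m : ℝ≥0∞)⁻¹ ^ card s := by
    rw [show ⇑(uniformBin m hm) = fun _ => (m : ℝ≥0∞)⁻¹ from funext (uniformBin_apply m hm),
      map_const', prod_replicate]
  rw [M0, PMF.map_apply_of_injective count_injective]
  exact (addConv_repeatMS_map_singleton_apply _ _ _ (repeatMS_trialM_apply _ p hp n) k s).trans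
    (by rw [profileMass, hprod])

theorem stmt6_general (m k n : ℕ) (hm : 0 < m)
    (p : ℝ) (hp0 : 0 ≤ p) (hp1 : p ≤ 1)
    (W : Fin m → ℕ) (w : ℕ) (hw : w = ∑ i, W i) (hkw : k ≤ w) :
    ((M0 m k n hm (ENNReal.ofReal p) (ENNReal.ofReal_le_one.mpr hp1)) W).toReal =
      (n.choose (w - k) : ℝ) * p ^ (w - k) * (1 - p) ^ (n - (w - k)) *
        ((w.factorial : ℝ) / ∏ i, ((W i).factorial : ℝ)) / (m : ℝ) ^ w := by
  obtain ⟨s, rfl⟩ : ∃ s : Multiset (Fin m), (fun i => s.count i) = W :=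
    ⟨Finsupp.toMultiset (Finsupp.equivFunOnFinite.symm W), funext fun i => by simp⟩
  have hcard : card s = w := by
    rw [hw, sum_count_eq_card fun a _ => Finset.mem_univ a]
  have hperms : (s.countPerms : ℝ) = w.factorial / ∏ i, ((s.count i).factorial : ℝ) := by
    rw [eq_div_iff (Finset.prod_ne_zero_iff.mpr fun i _ => by positivity), ← hcard]
    exact_mod_cast countPerms_mul_prod_factorial (Finset.subset_univ _)
  rw [M0_apply_count, hcard, if_pos hkw, ← hperms, ← ENNReal.ofReal_one,
    ← ENNReal.ofReal_sub 1 hp0]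
  simp only [binomWeight, ENNReal.toReal_mul, ENNReal.toReal_pow, ENNReal.toReal_inv,
    ENNReal.toReal_natCast, ENNReal.toReal_ofReal hp0, ENNReal.toReal_ofReal (sub_nonneg.mpr hp1)]
  ring

theorem stmt6 (m k n : ℕ) (hm : 0 < m) (hk : 0 < k) (hn : 0 < n)
    (p : ℝ) (hp0 : 0 ≤ p) (hp1 : p ≤ 1)
    (W : Fin m → ℕ) (w : ℕ) (hw : w = ∑ i, W i) (hkw : k ≤ w) (hwkn : w ≤ k + n) :
    ((M0 m k n hm (ENNReal.ofReal p) (ENNReal.ofReal_le_one.mpr hp1)) W).toReal =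
      (n.choose (w - k) : ℝ) * p ^ (w - k) * (1 - p) ^ (n - (w - k)) *
        ((w.factorial : ℝ) / ∏ i, ((W i).factorial : ℝ)) / (m : ℝ) ^ w :=
  stmt6_general m k n hm p hp0 hp1 W w hw hkw
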